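/- For the group A₇, the quantity λ − (|p|²/(2E)) ε (an element of so(2), defined where E ≠ 0) is invariant under the coadjoint action λ' = λ + e^{-b} det(Rp, v) ε + (1/2) e^{-2b} E |v|² ε, p' = e^{-b} R p + e^{-2b} E ε v, E' = e^{-2b} E, where R ∈ SO(2), b ∈ ℝ, v ∈ ℝ². -/
import Mathlib


/-- For the Lifshitz group A₇, the quantity λ − |p|²/(2E) (the coefficient of ε) is
invariant under the coadjoint action λ' = λ + e^{-b}det(Rp,v) + ½e^{-2b}E|v|²,
p' = e^{-b}Rp + e^{-2b}E εv, E' = e^{-2b}E, with R ∈ SO(2), whenever E ≠ 0. -/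
theorem stmt_18 (R : Matrix (Fin 2) (Fin 2) ℝ)
    (hR : R ∈ Matrix.orthogonalGroup (Fin 2) ℝ) (hdet : R.det = 1)
    (b : ℝ) (v p : Fin 2 → ℝ) (lam E : ℝ) (hE : E ≠ 0) :
    let sq : (Fin 2 → ℝ) → ℝ := fun q => q 0 ^ 2 + q 1 ^ 2
    let ε : Matrix (Fin 2) (Fin 2) ℝ := !![0, 1; -1, 0]
    let Rp := R.mulVec p
    let lam' := lam + Real.exp (-b) * (Rp 0 * v 1 - Rp 1 * v 0)
      + (1 / 2) * Real.exp (-2 * b) * E * sq v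
    let p' := Real.exp (-b) • Rp + (Real.exp (-2 * b) * E) • ε.mulVec v
    let E' := Real.exp (-2 * b) * E
    lam' - sq p' / (2 * E') = lam - sq p / (2 * E) := by
  intro sq ε Rp lam' p' E'
  have hE' : Real.exp (-2 * b) ≠ 0 := Real.exp_ne_zero _
  have hexp : Real.exp (-2 * b) = Real.exp (-b) * Real.exp (-b) := by
    rw [← Real.exp_add]; ring_nf
  have horth : Matrix.transpose R * R = 1 := by
    rw [Matrix.mem_orthogonalGroup_iff'] at hR
    simpa [Matrix.star_eq_conjTranspose] using hR
  have h00 := congrFun (congrFun horth 0) 0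
  have h01 := congrFun (congrFun horth 0) 1
  have h11 := congrFun (congrFun horth 1) 1
  simp [Matrix.mul_apply, Fin.sum_univ_two, Matrix.transpose_apply,
    Matrix.one_apply] at h00 h01 h11
  show lam + Real.exp (-b) * (Rp 0 * v 1 - Rp 1 * v 0)
      + (1 / 2) * Real.exp (-2 * b) * E * sq v - sq p' / (2 * E')
      = lam - sq p / (2 * E)
  have hRp0 : Rp 0 = R 0 0 * p 0 + R 0 1 * p 1 := by
    simp [Rp, Matrix.mulVec, dotProduct, Fin.sum_univ_two]
  have hRp1 : Rp 1 = R 1 0 * p 0 + R 1 1 * p 1 := by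
    simp [Rp, Matrix.mulVec, dotProduct, Fin.sum_univ_two]
  have hp'0 : p' 0 = Real.exp (-b) * Rp 0 + Real.exp (-2 * b) * E * v 1 := by
    simp [p', ε, Matrix.mulVec, dotProduct, Fin.sum_univ_two,
      Matrix.vecHead, Matrix.vecTail]
  have hp'1 : p' 1 = Real.exp (-b) * Rp 1 + Real.exp (-2 * b) * E * (-v 0) := by
    simp [p', ε, Matrix.mulVec, dotProduct, Fin.sum_univ_two,
      Matrix.vecHead, Matrix.vecTail]
  have hsqRp : sq Rp = sq p := by
    simp only [sq, hRp0, hRp1]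
    linear_combination p 0 ^ 2 * h00 + p 1 ^ 2 * h11 + 2 * p 0 * p 1 * h01
  have key : sq p' = Real.exp (-b) ^ 2 * sq Rp
      + 2 * Real.exp (-b) * (Real.exp (-2 * b) * E) * (Rp 0 * v 1 - Rp 1 * v 0)
      + (Real.exp (-2 * b) * E) ^ 2 * sq v := by
    simp only [sq, hp'0, hp'1]
    ring
  simp only [E', key, hsqRp]
  rw [hexp]
  have he : Real.exp (-b) ≠ 0 := Real.exp_ne_zero _
  field_simp
  ring
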